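/- Let G be the graph with vertex set [n]⁷ where x ~ y iff the difference pattern ρ(x,y) lies in S = Q₇ \ [(1⁴ × Q₃⁻) ∪ {0⁷} ∪ {0⁴ × 1³}]. Then the independence number of G is at most 3n. -/

import Mathlib

/-- `s` is an independent set of the graph `G`. -/
def IsIndepSet' {V : Type*} (G : SimpleGraph V) (s : Set V) : Prop :=
  ∀ ⦃u⦄, u ∈ s → ∀ ⦃v⦄, v ∈ s → u ≠ v → ¬ G.Adj u v

/-- The independence number of `G`. -/
noncomputable def alphaNum {V : Type*} (G : SimpleGraph V) [Fintype V] : ℕ :=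
  sSup {n | ∃ s : Finset V, IsIndepSet' G ↑s ∧ s.card = n}

/-- `Q₃⁻ = {0,1}³ \ {0³, 1³}` does not appear directly here; `Sset` is
`S = Q₇ \ [(1⁴ × Q₃⁻) ∪ {0⁷} ∪ {0⁴ × 1³}]`, where the first four coordinates play the
role of `Q₄` and the last three of `Q₃`. -/
def Sset : Set (Fin 7 → Bool) :=
  {v | ¬ (((∀ i : Fin 7, i.val < 4 → v i = true) ∧
            ¬ (∀ i j : Fin 7, 4 ≤ i.val → 4 ≤ j.val → v i = v j))
        ∨ (∀ i, v i = false)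
        ∨ ((∀ i : Fin 7, i.val < 4 → v i = false) ∧
           (∀ i : Fin 7, 4 ≤ i.val → v i = true)))}

/-- The difference pattern `ρ(x,y) ∈ {0,1}⁷` of `x, y ∈ [n]⁷` : the `i`-th coordinate is
`true` iff `xᵢ ≠ yᵢ`. -/
def rho {n : ℕ} (x y : Fin 7 → Fin n) : Fin 7 → Bool :=
  fun i => decide (x i ≠ y i)

/-- The counterexample graph on `[n]⁷`: `x ~ y` iff `ρ(x,y) ∈ S`. -/
def Gcex (n : ℕ) : SimpleGraph (Fin 7 → Fin n) where
  Adj x y := rho x y ∈ Sset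
  symm := by
    refine ⟨?_⟩
    intro x y h
    have e : rho y x = rho x y := funext fun i => by simp [rho, ne_comm]
    rwa [e]
  loopless := by
    refine ⟨?_⟩
    intro x h
    exact h (Or.inr (Or.inl (fun i => by simp [rho])))

/-!
Two distinct non-adjacent points either agree in the first four coordinates and differ in all
of the last three, or differ in all of the first four and agree in one of the last three.
Group an independent set by the first coordinate. If there is a single class, the fifth
coordinate is injective on it, so it has at most `n` points. Otherwise, for a class and a point
`u` outside it, every member agrees with `u` in one of the last three coordinates and no two
members can do so in the same coordinate; hence each of the at most `n` classes has at most
three points.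
-/

open Finset

section Separated

variable {α β γ ι : Type*} [DecidableEq β] [Fintype ι] {s : Finset α} {p : α → β} {g : ι → α → γ}

theorem card_filter_le_card_of_separated
    (hsame : ∀ x ∈ s, ∀ y ∈ s, x ≠ y → p x = p y → ∀ i, g i x ≠ g i y)
    {u : α} (hcross : ∀ x ∈ s, p x ≠ p u → ∃ i, g i x = g i u) {b : β} (hb : b ≠ p u) :
    #{x ∈ s | p x = b} ≤ Fintype.card ι := by
  classical
  have hcover : {x ∈ s | p x = b} ⊆ univ.biUnion fun i => {x ∈ s | p x = b ∧ g i x = g i u} := by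
    intro x hx
    obtain ⟨hxs, rfl⟩ := mem_filter.mp hx
    obtain ⟨i, hi⟩ := hcross x hxs hb
    exact mem_biUnion.mpr ⟨i, mem_univ _, mem_filter.mpr ⟨hxs, rfl, hi⟩⟩
  have hsmall : ∀ i, #{x ∈ s | p x = b ∧ g i x = g i u} ≤ 1 := fun i =>
    card_le_one.mpr fun x hx y hy => by
      simp only [mem_filter] at hx hy
      by_contra hxy
      exact hsame x hx.1 y hy.1 hxy (hx.2.1.trans hy.2.1.symm) i (hx.2.2.trans hy.2.2.symm)
  calc #{x ∈ s | p x = b} ≤ ∑ i, #{x ∈ s | p x = b ∧ g i x = g i u} :=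
        (card_le_card hcover).trans card_biUnion_le
    _ ≤ ∑ _i : ι, 1 := sum_le_sum fun i _ => hsmall i
    _ = Fintype.card ι := by simp

theorem card_le_card_mul_card_image_of_separated
    (hsame : ∀ x ∈ s, ∀ y ∈ s, x ≠ y → p x = p y → ∀ i, g i x ≠ g i y)
    (hcross : ∀ x ∈ s, ∀ y ∈ s, p x ≠ p y → ∃ i, g i x = g i y)
    (hspread : ∀ b, ∃ u ∈ s, p u ≠ b) :
    #s ≤ Fintype.card ι * #(s.image p) :=
  card_le_mul_card_image s _ fun b _ =>
    let ⟨u, hu, hub⟩ := hspread b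
    card_filter_le_card_of_separated hsame (fun x hx => hcross x hx u hu) (Ne.symm hub)

end Separated

namespace Gcex

variable {n : ℕ} {x y : Fin 7 → Fin n}

theorem apply_ne_of_not_adj (hxy : x ≠ y) (h : ¬ (Gcex n).Adj x y) (h0 : x 0 = y 0)
    (j : Fin 3) : x (Fin.natAdd 4 j) ≠ y (Fin.natAdd 4 j) := by
  simp only [Gcex, Sset, rho, Set.mem_ofPred_eq, not_not] at h
  rcases h with ⟨h4, -⟩ | h | ⟨-, h3⟩
  · simpa [h0] using h4 0
  · exact absurd (funext fun i => by simpa using h i) hxy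
  · simpa using h3 (Fin.natAdd 4 j) (by simp)

theorem exists_apply_eq_of_not_adj (h : ¬ (Gcex n).Adj x y) (h0 : x 0 ≠ y 0) :
    ∃ j : Fin 3, x (Fin.natAdd 4 j) = y (Fin.natAdd 4 j) := by
  simp only [Gcex, Sset, rho, Set.mem_ofPred_eq, not_not] at h
  rcases h with ⟨-, h3⟩ | h | ⟨h4, -⟩
  · obtain ⟨k, hk, hxk⟩ : ∃ k : Fin 7, 4 ≤ k.val ∧ x k = y k := by
      push Not at h3
      obtain ⟨i, j, hi, hj, hij⟩ := h3
      by_cases hxi : x i = y i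
      · exact ⟨i, hi, hxi⟩
      · exact ⟨j, hj, by simpa [hxi] using hij⟩
    have hk' : Fin.natAdd 4 (⟨k - 4, by omega⟩ : Fin 3) = k :=
      Fin.ext (by simp only [Fin.val_natAdd]; omega)
    exact ⟨_, hk' ▸ hxk⟩
  · exact absurd (by simpa using h 0) h0
  · simpa [h0] using h4 0

end Gcex

/-- The independence number of the counterexample graph `G` on `[n]⁷` is at most `3n`:
every independent set has at most `3n` elements. -/
theorem indep_Gcex_le (n : ℕ) (s : Finset (Fin 7 → Fin n))
    (hs : IsIndepSet' (Gcex n) ↑s) : s.card ≤ 3 * n := by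
  have hsame : ∀ x ∈ s, ∀ y ∈ s, x ≠ y → x 0 = y 0 → ∀ j : Fin 3,
      x (Fin.natAdd 4 j) ≠ y (Fin.natAdd 4 j) := fun x hx y hy hxy =>
    Gcex.apply_ne_of_not_adj hxy (hs hx hy hxy)
  by_cases hspread : ∀ b, ∃ u ∈ s, u 0 ≠ b
  · have hcross : ∀ x ∈ s, ∀ y ∈ s, x 0 ≠ y 0 → ∃ j : Fin 3,
        x (Fin.natAdd 4 j) = y (Fin.natAdd 4 j) := fun x hx y hy h0 =>
      Gcex.exists_apply_eq_of_not_adj (hs hx hy fun h => h0 (congrFun h 0)) h0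
    calc #s ≤ Fintype.card (Fin 3) * #(s.image (· 0)) :=
          card_le_card_mul_card_image_of_separated hsame hcross hspread
      _ ≤ 3 * n := by simpa using card_le_univ (s.image (· 0))
  · push Not at hspread
    obtain ⟨b, hb⟩ := hspread
    have hinj : Set.InjOn (· 4) (s : Set (Fin 7 → Fin n)) := fun x hx y hy hxy => by
      by_contra hne
      exact hsame x hx y hy hne ((hb x hx).trans (hb y hy).symm) 0 hxy
    calc #s ≤ Fintype.card (Fin n) := card_le_card_of_injOn _ (fun _ _ => mem_univ _) hinj
      _ ≤ 3 * n := by rw [Fintype.card_fin]; omega
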